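/- Consider the SBCM on the path graph P_n with symmetrically placed zealots. If δ ∈ [0, 1], then there exists γ_c > 0 such that the harmonic state x̄ is linearly stable for all γ ∈ [0, γ_c) and linearly unstable for all γ > γ_c. Moreover, if δ = 1, then γ_c = 1. -/

import Mathlib

open Finset Filter

namespace SBCM

variable {V : Type*} [Fintype V] [DecidableEq V]

/-- Sigmoidal influence weight. -/
noncomputable def wt (G : SimpleGraph V) [DecidableRel G.Adj] (γ δ : ℝ) (x : V → ℝ)
    (i j : V) : ℝ :=
  if G.Adj i j then 1 / (1 + Real.exp (γ * (x i - x j) ^ 2 - γ * δ)) else 0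

/-- SBCM update operator. -/
noncomputable def F (G : SimpleGraph V) [DecidableRel G.Adj] (Z : Finset V) (γ δ : ℝ)
    (x : V → ℝ) (i : V) : ℝ :=
  if i ∈ Z then 0
  else (∑ j, wt G γ δ x i j * (x j - x i)) / (∑ j, wt G γ δ x i j)

/-- Jacobian block over the persuadable nodes. -/
noncomputable def Jp (G : SimpleGraph V) [DecidableRel G.Adj] (Z : Finset V) (γ δ : ℝ)
    (x : V → ℝ) : Matrix {v : V // v ∉ Z} {v : V // v ∉ Z} ℝ :=
  fun i j => fderiv ℝ (fun y : V → ℝ => F G Z γ δ y i.val) x (Pi.single (j : V) (1 : ℝ))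

/-- `μ` is a (real) eigenvalue of the matrix `M`. -/
def HasEig {n : Type*} [Fintype n] (M : Matrix n n ℝ) (μ : ℝ) : Prop :=
  ∃ φ : n → ℝ, φ ≠ 0 ∧ M.mulVec φ = μ • φ

/-- All eigenvalues of `M` are strictly negative. -/
def LinStable {n : Type*} [Fintype n] (M : Matrix n n ℝ) : Prop :=
  ∀ μ : ℝ, HasEig M μ → μ < 0

/-- `M` has a strictly positive eigenvalue. -/
def LinUnstable {n : Type*} [Fintype n] (M : Matrix n n ℝ) : Prop :=
  ∃ μ : ℝ, 0 < μ ∧ HasEig M μ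

end SBCM

namespace SBCM

/-- The path graph on `n + 2` nodes `0, 1, …, n + 1`. -/
def pathG (n : ℕ) : SimpleGraph (Fin (n + 2)) where
  Adj j k := (j : ℕ) + 1 = (k : ℕ) ∨ (k : ℕ) + 1 = (j : ℕ)
  symm := ⟨fun _ _ h => Or.symm h⟩
  loopless := ⟨fun a h => by rcases h with h | h <;> omega⟩

instance (n : ℕ) : DecidableRel (pathG n).Adj :=
  fun _ _ => inferInstanceAs (Decidable (_ ∨ _))

/-- The zealots of the path graph: the two endpoints. -/
def Zpath (n : ℕ) : Finset (Fin (n + 2)) := {0, Fin.last (n + 1)}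

/-- The harmonic state on the path graph with symmetrically placed zealots:
`x̄_j = −(n+1)/2 + j` (`0`-indexed). -/
noncomputable def xbarPath (n : ℕ) : Fin (n + 2) → ℝ :=
  fun j => -((n : ℝ) + 1) / 2 + (j : ℕ)

end SBCM

/-!
At the harmonic state every edge of the path carries the opinion difference `1`, so all influence
weights equal `w = weight γ δ 1`. Differentiating the weighted mean of the two neighbour
differences at an interior node shows that the Jacobian block is `jacCoeff γ δ • L` with
`jacCoeff γ δ = γ (1 - w) - 1/2` and `L` the graph Laplacian restricted to the persuadable nodes.
Because the path is connected and contains a zealot, `L` is positive definite, so the sign of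
`jacCoeff γ δ` decides linear stability. For `δ ≤ 1` the map `γ ↦ jacCoeff γ δ` is continuous
and strictly increasing on `[0, ∞)`, equal to `-1/2` at `0` and nonnegative at `2`; its zero is
`γ_c`. For `δ = 1` one has `w = 1/2`, hence `jacCoeff γ 1 = (γ - 1) / 2` and `γ_c = 1`.
-/

namespace SBCM

open SimpleGraph Matrix

section LinearAlgebra

lemma dotProduct_submatrix_val_mulVec {V : Type*} [Fintype V] {p : V → Prop} [DecidablePred p]
    (M : Matrix V V ℝ) (φ : Subtype p → ℝ) :
    φ ⬝ᵥ (M.submatrix Subtype.val Subtype.val *ᵥ φ) =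
      Function.extend Subtype.val φ 0 ⬝ᵥ (M *ᵥ Function.extend Subtype.val φ 0) := by
  have hsum (g : V → ℝ) : ∑ i, φ i * g i = ∑ v, Function.extend Subtype.val φ 0 v * g v :=
    Fintype.sum_of_injective _ Subtype.val_injective _ _
      (fun v hv => by rw [Function.extend_apply' _ _ _ hv, Pi.zero_apply, zero_mul])
      (fun i => by rw [Subtype.val_injective.extend_apply])
  simp only [dotProduct, mulVec, submatrix_apply]
  rw [← hsum]
  refine Finset.sum_congr rfl fun i _ => ?_
  simp only [mul_comm (M _ _), hsum]

theorem posDef_lapMatrix_submatrix_compl {V : Type*} [Fintype V] [DecidableEq V]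
    {G : SimpleGraph V} [DecidableRel G.Adj] (hG : G.Connected) {Z : Finset V}
    (hZ : Z.Nonempty) :
    ((G.lapMatrix ℝ).submatrix (Subtype.val : {v // v ∉ Z} → V) Subtype.val).PosDef := by
  refine .of_dotProduct_mulVec_pos ((isHermitian_lapMatrix ℝ G).submatrix _) fun φ hφ => ?_
  rw [star_trivial, dotProduct_submatrix_val_mulVec]
  set Φ := Function.extend (Subtype.val : {v // v ∉ Z} → V) φ 0
  refine ((posSemidef_lapMatrix ℝ G).dotProduct_mulVec_nonneg Φ).lt_of_ne' fun hzero => hφ ?_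
  obtain ⟨z, hz⟩ := hZ
  have hΦz : Φ z = 0 := Function.extend_apply' _ _ _ fun ⟨i, hi⟩ => i.2 (hi ▸ hz)
  rw [star_trivial, ← toLinearMap₂'_apply',
    lapMatrix_toLinearMap₂'_apply'_eq_zero_iff_forall_reachable] at hzero
  funext i
  rw [Pi.zero_apply, ← Subtype.val_injective.extend_apply φ 0 i, ← hΦz]
  exact hzero _ _ (hG.preconnected _ _)

variable {ι : Type*} [Fintype ι] {L : Matrix ι ι ℝ} {c : ℝ}

lemma linStable_smul_of_posDef (hL : L.PosDef) (hc : c < 0) : LinStable (c • L) := by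
  rintro μ ⟨φ, hφ, hμ⟩
  have hquad := hL.dotProduct_mulVec_pos hφ
  have hnorm := dotProduct_star_self_pos_iff.mpr hφ
  rw [star_trivial] at hquad hnorm
  have heq : μ * (φ ⬝ᵥ φ) = c * (φ ⬝ᵥ (L *ᵥ φ)) := by
    rw [← smul_eq_mul, ← dotProduct_smul, ← hμ, smul_mulVec, dotProduct_smul, smul_eq_mul]
  nlinarith

lemma linUnstable_smul_of_posDef [DecidableEq ι] [Nonempty ι] (hL : L.PosDef) (hc : 0 < c) :
    LinUnstable (c • L) := by
  let i : ι := Classical.arbitrary ι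
  refine ⟨c * hL.1.eigenvalues i, mul_pos hc (hL.eigenvalues_pos i),
    hL.1.eigenvectorBasis i, ?_, ?_⟩
  · exact (WithLp.ofLp_eq_zero 2).not.mpr (hL.1.eigenvectorBasis.orthonormal.ne_zero i)
  · rw [smul_mulVec, hL.1.mulVec_eigenvectorBasis, smul_smul]

end LinearAlgebra

noncomputable def weight (γ δ t : ℝ) : ℝ := (1 + Real.exp (γ * t ^ 2 - γ * δ))⁻¹

lemma weight_pos (γ δ t : ℝ) : 0 < weight γ δ t := by unfold weight; positivity

lemma weight_lt_one (γ δ t : ℝ) : weight γ δ t < 1 :=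
  inv_lt_one_of_one_lt₀ (lt_add_of_pos_right 1 (Real.exp_pos _))

lemma weight_neg (γ δ t : ℝ) : weight γ δ (-t) = weight γ δ t := by rw [weight, weight, neg_sq]

lemma antitone_weight_one {δ : ℝ} (hδ : δ ≤ 1) : Antitone fun γ => weight γ δ 1 := by
  intro a b hab
  simp only [weight]
  gcongr (1 + Real.exp ?_)⁻¹
  nlinarith

lemma hasDerivAt_weight (γ δ t : ℝ) :
    HasDerivAt (weight γ δ) (-(2 * γ * t) * weight γ δ t * (1 - weight γ δ t)) t := by
  have hE : HasDerivAt (fun s => 1 + Real.exp (γ * s ^ 2 - γ * δ))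
      (Real.exp (γ * t ^ 2 - γ * δ) * (γ * (2 * t))) t := by
    simpa using (((hasDerivAt_pow 2 t).const_mul γ).sub_const (γ * δ)).exp.const_add 1
  have hden : 1 + Real.exp (γ * t ^ 2 - γ * δ) ≠ 0 := by positivity
  refine (hE.inv hden).congr_deriv ?_
  unfold weight
  field_simp
  ring

lemma wt_eq_weight {V : Type*} (G : SimpleGraph V) [DecidableRel G.Adj] (γ δ : ℝ)
    (x : V → ℝ) (i j : V) :
    wt G γ δ x i j = if G.Adj i j then weight γ δ (x j - x i) else 0 := by
  rw [wt, weight, one_div, sub_sq_comm]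

lemma sum_wt_mul {V : Type*} [Fintype V] (G : SimpleGraph V) [DecidableRel G.Adj] (γ δ : ℝ)
    (x : V → ℝ) (i : V) (f : V → ℝ) :
    ∑ j, wt G γ δ x i j * f j = ∑ j ∈ G.neighborFinset i, weight γ δ (x j - x i) * f j := by
  simp only [wt_eq_weight, ite_mul, zero_mul, ← Finset.sum_filter, neighborFinset_eq_filter]

noncomputable def pairMean (γ δ : ℝ) (d : ℝ × ℝ) : ℝ :=
  (weight γ δ d.1 * d.1 + weight γ δ d.2 * d.2) / (weight γ δ d.1 + weight γ δ d.2)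

noncomputable def jacCoeff (γ δ : ℝ) : ℝ := γ * (1 - weight γ δ 1) - 1 / 2

lemma hasFDerivAt_pairMean (γ δ : ℝ) :
    HasFDerivAt (pairMean γ δ)
      (-jacCoeff γ δ • (ContinuousLinearMap.fst ℝ ℝ ℝ + ContinuousLinearMap.snd ℝ ℝ ℝ))
      ((-1, 1) : ℝ × ℝ) := by
  have hw : weight γ δ 1 ≠ 0 := (weight_pos γ δ 1).ne'
  have hmul : ∀ t : ℝ, HasDerivAt (fun s => weight γ δ s * s)
      (-(2 * γ * t) * weight γ δ t * (1 - weight γ δ t) * t + weight γ δ t * 1) t :=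
    fun t => (hasDerivAt_weight γ δ t).mul (hasDerivAt_id t)
  have hnum : HasFDerivAt (fun d : ℝ × ℝ => weight γ δ d.1 * d.1 + weight γ δ d.2 * d.2)
      ((weight γ δ 1 - 2 * γ * weight γ δ 1 * (1 - weight γ δ 1)) •
        (ContinuousLinearMap.fst ℝ ℝ ℝ + ContinuousLinearMap.snd ℝ ℝ ℝ))
      ((-1, 1) : ℝ × ℝ) := by
    have h1 : HasFDerivAt (fun d : ℝ × ℝ => weight γ δ d.1 * d.1)
        (_ • ContinuousLinearMap.fst ℝ ℝ ℝ) ((-1, 1) : ℝ × ℝ) :=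
      (hmul (-1)).comp_hasFDerivAt_of_eq _ hasFDerivAt_fst rfl
    have h2 : HasFDerivAt (fun d : ℝ × ℝ => weight γ δ d.2 * d.2)
        (_ • ContinuousLinearMap.snd ℝ ℝ ℝ) ((-1, 1) : ℝ × ℝ) :=
      (hmul 1).comp_hasFDerivAt_of_eq _ hasFDerivAt_snd rfl
    refine (h1.add h2).congr_fderiv (ContinuousLinearMap.ext fun d => ?_)
    simp [weight_neg]
    ring
  have hden : DifferentiableAt ℝ (fun d : ℝ × ℝ => (weight γ δ d.1 + weight γ δ d.2)⁻¹)
      ((-1, 1) : ℝ × ℝ) := by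
    have hd : ∀ t, DifferentiableAt ℝ (weight γ δ) t :=
      fun t => (hasDerivAt_weight γ δ t).differentiableAt
    refine ((hd _).comp _ differentiableAt_fst |>.add ((hd _).comp _ differentiableAt_snd)).inv ?_
    exact (add_pos (weight_pos _ _ _) (weight_pos _ _ _)).ne'
  have hquot : pairMean γ δ = (fun d : ℝ × ℝ => weight γ δ d.1 * d.1 + weight γ δ d.2 * d.2) *
      fun d => (weight γ δ d.1 + weight γ δ d.2)⁻¹ :=
    funext fun d => div_eq_mul_inv _ _
  rw [hquot]
  -- the numerator vanishes at `(-1, 1)`, so the derivative of the denominator drops out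
  refine (hnum.mul hden.hasFDerivAt).congr_fderiv (ContinuousLinearMap.ext fun d => ?_)
  simp [weight_neg, jacCoeff]
  field_simp
  ring

section Path

variable {n : ℕ}

lemma pathG_eq_pathGraph (n : ℕ) : pathG n = pathGraph (n + 2) := by
  ext j k
  rw [pathGraph_adj]
  rfl

lemma pathG_connected (n : ℕ) : (pathG n).Connected := by
  rw [pathG_eq_pathGraph]
  exact pathGraph_connected _

lemma nonempty_compl_Zpath (hn : 1 ≤ n) : Nonempty {v : Fin (n + 2) // v ∉ Zpath n} :=
  ⟨⟨⟨1, by omega⟩, by simp [Zpath, Fin.ext_iff]; omega⟩⟩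

lemma val_sub_one_add_one_of_notMem_Zpath {i : Fin (n + 2)} (hi : i ∉ Zpath n) :
    ((i - 1 : Fin (n + 2)) : ℕ) + 1 = i ∧ ((i + 1 : Fin (n + 2)) : ℕ) = i + 1 := by
  simp only [Zpath, Finset.mem_insert, Finset.mem_singleton, not_or] at hi
  have hlt : (i : ℕ) + 1 < n + 2 := by
    have := Fin.val_ne_of_ne hi.2
    rw [Fin.val_last] at this
    omega
  refine ⟨?_, Fin.val_add_one_of_lt' hlt⟩
  rw [Fin.val_sub_one_of_ne_zero hi.1]
  have := Fin.pos_iff_ne_zero.mpr hi.1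
  omega

lemma sub_one_ne_add_one_of_notMem_Zpath {i : Fin (n + 2)} (hi : i ∉ Zpath n) :
    i - 1 ≠ i + 1 := by
  obtain ⟨hsub, hadd⟩ := val_sub_one_add_one_of_notMem_Zpath hi
  rw [Ne, Fin.ext_iff]
  omega

lemma neighborFinset_pathG {i : Fin (n + 2)} (hi : i ∉ Zpath n) :
    (pathG n).neighborFinset i = {i - 1, i + 1} := by
  obtain ⟨hsub, hadd⟩ := val_sub_one_add_one_of_notMem_Zpath hi
  ext j
  simp only [mem_neighborFinset, Finset.mem_insert, Finset.mem_singleton, Fin.ext_iff]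
  change (i : ℕ) + 1 = j ∨ (j : ℕ) + 1 = i ↔ _
  omega

lemma degree_pathG {i : Fin (n + 2)} (hi : i ∉ Zpath n) : (pathG n).degree i = 2 := by
  rw [← card_neighborFinset_eq_degree, neighborFinset_pathG hi,
    Finset.card_pair (sub_one_ne_add_one_of_notMem_Zpath hi)]

lemma F_pathG (γ δ : ℝ) {i : Fin (n + 2)} (hi : i ∉ Zpath n) (y : Fin (n + 2) → ℝ) :
    F (pathG n) (Zpath n) γ δ y i = pairMean γ δ (y (i - 1) - y i, y (i + 1) - y i) := by
  have hsum : ∀ f : Fin (n + 2) → ℝ, ∑ j, wt (pathG n) γ δ y i j * f j =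
      weight γ δ (y (i - 1) - y i) * f (i - 1) + weight γ δ (y (i + 1) - y i) * f (i + 1) :=
    fun f => by
      rw [sum_wt_mul, neighborFinset_pathG hi,
        Finset.sum_pair (sub_one_ne_add_one_of_notMem_Zpath hi)]
  have hden := hsum 1
  simp only [Pi.one_apply, mul_one] at hden
  rw [F, if_neg hi, hsum, hden]
  rfl

lemma xbarPath_sub_of_notMem_Zpath {i : Fin (n + 2)} (hi : i ∉ Zpath n) :
    xbarPath n (i - 1) - xbarPath n i = -1 ∧ xbarPath n (i + 1) - xbarPath n i = 1 := by
  obtain ⟨hsub, hadd⟩ := val_sub_one_add_one_of_notMem_Zpath hi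
  simp only [xbarPath, ← hsub, hadd]
  push_cast
  constructor <;> ring

lemma fderiv_F_pathG_xbarPath (γ δ : ℝ) {i : Fin (n + 2)} (hi : i ∉ Zpath n)
    (v : Fin (n + 2) → ℝ) :
    fderiv ℝ (fun y => F (pathG n) (Zpath n) γ δ y i) (xbarPath n) v =
      jacCoeff γ δ * (lapMatrix ℝ (pathG n) *ᵥ v) i := by
  obtain ⟨hxsub, hxadd⟩ := xbarPath_sub_of_notMem_Zpath hi
  have hproj (j : Fin (n + 2)) := hasFDerivAt_apply (𝕜 := ℝ) j (xbarPath n)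
  have hdiff := ((hproj (i - 1)).sub (hproj i)).prodMk ((hproj (i + 1)).sub (hproj i))
  have hpair := hasFDerivAt_pairMean γ δ
  rw [← hxsub, ← hxadd] at hpair
  have hcomp : HasFDerivAt
      (fun y : Fin (n + 2) → ℝ => pairMean γ δ (y (i - 1) - y i, y (i + 1) - y i)) _ _ :=
    (hpair.comp (xbarPath n) hdiff :)
  rw [funext (F_pathG γ δ hi), hcomp.fderiv,
    lapMatrix_mulVec_apply, degree_pathG hi, neighborFinset_pathG hi,
    Finset.sum_pair (sub_one_ne_add_one_of_notMem_Zpath hi)]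
  simp
  ring

lemma Jp_pathG_xbarPath (γ δ : ℝ) :
    Jp (pathG n) (Zpath n) γ δ (xbarPath n) =
      jacCoeff γ δ • (lapMatrix ℝ (pathG n)).submatrix Subtype.val Subtype.val := by
  ext i j
  rw [Jp, fderiv_F_pathG_xbarPath γ δ i.2, mulVec_single_one]
  rfl

end Path

lemma strictMonoOn_jacCoeff {δ : ℝ} (hδ : δ ≤ 1) :
    StrictMonoOn (fun γ => jacCoeff γ δ) (Set.Ici 0) := by
  intro a ha b _ hab
  have hw := antitone_weight_one hδ hab.le
  have hb := weight_lt_one b δ 1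
  simp only [jacCoeff, Set.mem_Ici] at ha hw ⊢
  nlinarith

lemma continuous_jacCoeff (δ : ℝ) : Continuous fun γ => jacCoeff γ δ := by
  unfold jacCoeff weight
  fun_prop (disch := exact fun _ => by positivity)

lemma exists_pos_jacCoeff_eq_zero {δ : ℝ} (hδ : δ ≤ 1) : ∃ γc, 0 < γc ∧ jacCoeff γc δ = 0 := by
  have h0 : jacCoeff 0 δ = -1 / 2 := by norm_num [jacCoeff]
  have h2 : 0 ≤ jacCoeff 2 δ := by
    have : 1 ≤ Real.exp (2 * 1 ^ 2 - 2 * δ) := Real.one_le_exp (by linarith)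
    have : weight 2 δ 1 ≤ 1 / 2 := by
      rw [weight, one_div]
      gcongr
      linarith
    rw [jacCoeff]
    linarith
  obtain ⟨γc, ⟨hγc, -⟩, hzero⟩ := intermediate_value_Icc zero_le_two
    (continuous_jacCoeff δ).continuousOn ⟨h0.trans_le (by norm_num), h2⟩
  refine ⟨γc, hγc.lt_of_ne ?_, hzero⟩
  rintro rfl
  norm_num [h0] at hzero

lemma jacCoeff_one_right (γ : ℝ) : jacCoeff γ 1 = (γ - 1) / 2 := by
  norm_num [jacCoeff, weight]
  ring

end SBCM

/-- On the path graph `P_n` with `δ ∈ [0, 1]`, there is a critical value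
`γ_c > 0` such that the harmonic state is linearly stable for `γ ∈ [0, γ_c)` and
linearly unstable for `γ > γ_c`; moreover `γ_c = 1` when `δ = 1`. -/
theorem stmt_13 (n : ℕ) (hn : 1 ≤ n) (δ : ℝ) (hδ : δ ∈ Set.Icc (0 : ℝ) 1) :
    ∃ γc : ℝ, 0 < γc ∧
      (∀ γ : ℝ, 0 ≤ γ → γ < γc →
        SBCM.LinStable (SBCM.Jp (SBCM.pathG n) (SBCM.Zpath n) γ δ (SBCM.xbarPath n))) ∧
      (∀ γ : ℝ, γc < γ →
        SBCM.LinUnstable (SBCM.Jp (SBCM.pathG n) (SBCM.Zpath n) γ δ (SBCM.xbarPath n))) ∧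
      (δ = 1 → γc = 1) := by
  obtain ⟨γc, hγc, hzero⟩ := SBCM.exists_pos_jacCoeff_eq_zero hδ.2
  have hmono := SBCM.strictMonoOn_jacCoeff hδ.2
  have hL := SBCM.posDef_lapMatrix_submatrix_compl (SBCM.pathG_connected n)
    (Z := SBCM.Zpath n) ⟨0, by simp [SBCM.Zpath]⟩
  refine ⟨γc, hγc, fun γ hγ hlt => ?_, fun γ hlt => ?_, fun hδ1 => ?_⟩
  · rw [SBCM.Jp_pathG_xbarPath]
    exact SBCM.linStable_smul_of_posDef hL (hzero ▸ hmono hγ hγc.le hlt)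
  · have := SBCM.nonempty_compl_Zpath hn
    rw [SBCM.Jp_pathG_xbarPath]
    exact SBCM.linUnstable_smul_of_posDef hL (hzero ▸ hmono hγc.le (hγc.trans hlt).le hlt)
  · subst hδ1
    rw [SBCM.jacCoeff_one_right] at hzero
    linarith
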